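/- arXiv:1812.03583 — 5 statements merged into one kernel-verified Lean document; each statement's English description precedes it below -/
import Mathlib

section
/- Let f : B → A be a faithfully flat homomorphism of commutative rings. Then the extension-of-scalars functor extendScalars f : ModuleCat B ⥤ ModuleCat A is comonadic: the comparison functor from ModuleCat B to the category of coalgebras over the base-change comonad T on ModuleCat A induced by the adjunction extendScalars f ⊣ restrictScalars f is an equivalence of categories. -/
open CategoryTheory

section Aux

open Limits

universe v

variable {B A : Type v} [CommRing B] [CommRing A] (f : B →+* A)

instance extendScalars_additive_aux : (ModuleCat.extendScalars.{v,v} f).Additive where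
  map_add {M N φ ψ} := ModuleCat.hom_ext <| LinearMap.ext fun x => by
    induction x using TensorProduct.induction_on with
    | zero => exact (map_zero _).trans (map_zero _).symm
    | tmul s m =>
      show s ⊗ₜ[B] ((φ + ψ).hom m) = _
      rw [ModuleCat.hom_add, LinearMap.add_apply, TensorProduct.tmul_add]; rfl
    | add a b ha hb => exact (map_add _ a b).trans ((congrArg₂ (· + ·) ha hb).trans (map_add _ a b).symm)

theorem extendScalars_preservesFiniteLimits_aux
    (hfl : letI := f.toAlgebra; Module.Flat B A) :
    PreservesFiniteLimits (ModuleCat.extendScalars.{v,v} f) := by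
  letI := f.toAlgebra
  haveI : Module.Flat B A := hfl
  have h := ((ModuleCat.extendScalars.{v,v} f).preservesFiniteLimits_tfae).out 0 3
  rw [← h]
  intro S hS
  constructor
  · rw [ShortComplex.ShortExact.moduleCat_exact_iff_function_exact]
    have h1 : Function.Exact ⇑S.f ⇑S.g :=
      (ShortComplex.ShortExact.moduleCat_exact_iff_function_exact S).mp hS.exact
    exact Module.Flat.lTensor_exact A h1
  · rw [ModuleCat.mono_iff_injective]
    haveI := hS.mono_f
    have hinj : Function.Injective ⇑S.f := (ModuleCat.mono_iff_injective S.f).mp hS.mono_f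
    exact Module.Flat.lTensor_preserves_injective_linearMap _ hinj

theorem extendScalars_reflectsIsomorphisms_aux
    (hff : letI := f.toAlgebra; Module.FaithfullyFlat B A) :
    (ModuleCat.extendScalars.{v,v} f).ReflectsIsomorphisms := by
  letI := f.toAlgebra
  haveI : Module.FaithfullyFlat B A := hff
  constructor
  intro M N φ hiso
  rw [ConcreteCategory.isIso_iff_bijective] at hiso ⊢
  have hbij : Function.Bijective ⇑(LinearMap.lTensor A φ.hom) := hiso
  set φ' : M →ₗ[B] N := φ.hom with hφ'
  constructor
  · -- injective
    have hcomp : φ' ∘ₗ (LinearMap.ker φ').subtype = 0 := by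
      ext ⟨x, hx⟩; exact hx
    have hi : LinearMap.lTensor A (LinearMap.ker φ').subtype = 0 := by
      apply LinearMap.ext; intro x
      apply hbij.1
      have := congrArg (fun g => LinearMap.lTensor A g x) hcomp
      simpa [LinearMap.lTensor_comp, LinearMap.comp_apply] using this
    have hsub : (LinearMap.ker φ').subtype = 0 :=
      (Module.FaithfullyFlat.zero_iff_lTensor_zero B A _).mpr hi
    intro x y hxy
    have hmem : x - y ∈ LinearMap.ker φ' := by
      simp [LinearMap.mem_ker, map_sub, hφ']
      exact sub_eq_zero.mpr hxy
    have : x - y = (LinearMap.ker φ').subtype ⟨x - y, hmem⟩ := rfl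
    rw [hsub] at this
    exact sub_eq_zero.mp (by simpa using this)
  · -- surjective
    have hcomp : (LinearMap.range φ').mkQ ∘ₗ φ' = 0 := LinearMap.range_mkQ_comp φ'
    have hp : LinearMap.lTensor A (LinearMap.range φ').mkQ = 0 := by
      apply LinearMap.ext; intro x
      obtain ⟨y, rfl⟩ := hbij.2 x
      have := congrArg (fun g => LinearMap.lTensor A g y) hcomp
      simpa [LinearMap.lTensor_comp, LinearMap.comp_apply] using this
    have hq : (LinearMap.range φ').mkQ = 0 :=
      (Module.FaithfullyFlat.zero_iff_lTensor_zero B A _).mpr hp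
    intro y
    have : y ∈ LinearMap.range φ' := by
      rw [← Submodule.ker_mkQ (LinearMap.range φ'), LinearMap.mem_ker, hq]
      rfl
    exact this

end Aux

/-- If `f : B → A` is a faithfully flat homomorphism of commutative rings, then the
extension-of-scalars functor `ModuleCat.extendScalars f : ModuleCat B ⥤ ModuleCat A` is
comonadic: the comparison functor from `ModuleCat B` to the category of coalgebras over
the base-change comonad induced by the adjunction `extendScalars f ⊣ restrictScalars f`
is an equivalence of categories. -/
theorem extendScalars_comonadic_of_faithfullyFlat
    {B A : Type u} [CommRing B] [CommRing A] (f : B →+* A)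
    (hff : letI := f.toAlgebra; Module.FaithfullyFlat B A) :
    (Comonad.comparison (ModuleCat.extendRestrictScalarsAdj.{u} f)).IsEquivalence := by
  letI := f.toAlgebra
  haveI : Module.FaithfullyFlat B A := hff
  haveI : Limits.PreservesFiniteLimits (ModuleCat.extendScalars.{u,u} f) :=
    extendScalars_preservesFiniteLimits_aux f inferInstance
  haveI : (ModuleCat.extendScalars.{u,u} f).ReflectsIsomorphisms :=
    extendScalars_reflectsIsomorphisms_aux f hff
  haveI : Comonad.PreservesLimitOfIsCoreflexivePair (ModuleCat.extendScalars.{u,u} f) :=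
    ⟨fun _ _ g h _ => inferInstance⟩
  exact (Comonad.comonadicOfHasPreservesCoreflexiveEqualizersOfReflectsIsomorphisms
    (ModuleCat.extendRestrictScalarsAdj.{u} f)).eqv
end

section
/- Let f : B → A be a homomorphism of commutative rings. The category of descent data for f is equivalent to the category of coalgebras over the base-change comonad T on ModuleCat A. The equivalence sends a descent datum (M, θ) to the A-module M equipped with the coaction M → A ⊗[B] M given by the composite of m ↦ m ⊗ 1 : M → M ⊗[B] A with θ, and acts as the identity on underlying A-linear maps; under this correspondence the cocycle condition corresponds to coassociativity of the coaction and the unit condition corresponds to the counit axiom. -/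
open CategoryTheory TensorProduct

namespace ModuleDescent

noncomputable section

universe u

variable {B A : Type u} [CommRing B] [CommRing A] (f : B →+* A)

/-- The `B`-module obtained from an `A`-module by restriction of scalars along `f`. -/
abbrev res (M : ModuleCat.{u} A) : ModuleCat.{u} B := (ModuleCat.restrictScalars f).obj M

/-- `A` as a `B`-module via `f`. -/
abbrev resA : ModuleCat.{u} B := res f (ModuleCat.of A A)

/-- Scalar multiplication by `a : A` as a `B`-linear endomorphism of (the restriction of
scalars of) an `A`-module `M`. -/
def smulHom (M : ModuleCat.{u} A) (a : A) : ↥(res f M) →ₗ[B] ↥(res f M) where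
  toFun m := (a • m : ↥M)
  map_add' := smul_add a
  map_smul' b m := by
    show a • (f b • m : ↥M) = f b • (a • m : ↥M)
    rw [← mul_smul, mul_comm, mul_smul]

/-- The identity function from `A` (as a `B`-module via `f`) to `A`. -/
def toA (x : ↥(resA f)) : A := x

/-- Left multiplication by `a' : A` as a `B`-linear endomorphism of `A`. -/
def mulHom (a' : A) : ↥(resA f) →ₗ[B] ↥(resA f) where
  toFun x := (a' * toA f x : A)
  map_add' x y := by
    show (a' * (toA f x + toA f y) : A) = a' * toA f x + a' * toA f y
    ring
  map_smul' b x := by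
    show (a' * (f b * toA f x) : A) = f b * (a' * toA f x)
    ring

/-- The action of the pure tensor `a ⊗ a'` of `A ⊗[B] A` on `M ⊗[B] A`:
`(a ⊗ a') • (m ⊗ x) = (a • m) ⊗ (a' * x)`. -/
def actL (M : ModuleCat.{u} A) (a a' : A) :
    ↥(res f M) ⊗[B] ↥(resA f) →ₗ[B] ↥(res f M) ⊗[B] ↥(resA f) :=
  TensorProduct.map (smulHom f M a) (mulHom f a')

/-- The action of the pure tensor `a ⊗ a'` of `A ⊗[B] A` on `A ⊗[B] M`:
`(a ⊗ a') • (x ⊗ m) = (a * x) ⊗ (a' • m)`. -/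
def actR (M : ModuleCat.{u} A) (a a' : A) :
    ↥(resA f) ⊗[B] ↥(res f M) →ₗ[B] ↥(resA f) ⊗[B] ↥(res f M) :=
  TensorProduct.map (mulHom f a) (smulHom f M a')

/-- The map `α` swapping the two `A`-factors of `M ⊗[B] A ⊗[B] A`. -/
def swapMAA (M : ModuleCat.{u} A) :
    (↥(res f M) ⊗[B] ↥(resA f)) ⊗[B] ↥(resA f) →ₗ[B]
      (↥(res f M) ⊗[B] ↥(resA f)) ⊗[B] ↥(resA f) :=
  (TensorProduct.assoc B _ _ _).symm.toLinearMap ∘ₗ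
    (TensorProduct.congr (LinearEquiv.refl B ↥(res f M))
      (TensorProduct.comm B ↥(resA f) ↥(resA f))).toLinearMap ∘ₗ
        (TensorProduct.assoc B _ _ _).toLinearMap

/-- The map `β` swapping the last two factors of `A ⊗[B] M ⊗[B] A`. -/
def swapAMA (M : ModuleCat.{u} A) :
    (↥(resA f) ⊗[B] ↥(res f M)) ⊗[B] ↥(resA f) →ₗ[B]
      (↥(resA f) ⊗[B] ↥(resA f)) ⊗[B] ↥(res f M) :=
  (TensorProduct.assoc B _ _ _).symm.toLinearMap ∘ₗ
    (TensorProduct.congr (LinearEquiv.refl B ↥(resA f))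
      (TensorProduct.comm B ↥(res f M) ↥(resA f))).toLinearMap ∘ₗ
        (TensorProduct.assoc B _ _ _).toLinearMap

/-- The `B`-bilinear evaluation `a ↦ (m ↦ a • m)`. -/
def ev (M : ModuleCat.{u} A) : ↥(resA f) →ₗ[B] (↥(res f M) →ₗ[B] ↥(res f M)) where
  toFun a := smulHom f M (toA f a)
  map_add' a a' := LinearMap.ext fun m => by
    show (toA f a + toA f a') • m = toA f a • m + toA f a' • m
    rw [add_smul]
  map_smul' b a := LinearMap.ext fun m => by
    show (f b * toA f a) • m = f b • ((toA f a • m : ↥M))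
    rw [mul_smul]

/-- The action map `A ⊗[B] M → M`, `a ⊗ m ↦ a • m`. -/
def unitMap (M : ModuleCat.{u} A) :
    ↥(resA f) ⊗[B] ↥(res f M) →ₗ[B] ↥(res f M) :=
  TensorProduct.lift (ev f M)

/-- A descent datum for the ring homomorphism `f : B →+* A`: an `A`-module `M` together
with an additive map `θ : M ⊗[B] A → A ⊗[B] M` which is linear over `A ⊗[B] A`
(equivalently: additive, `B`-linear, and compatible with the action of the pure tensors
of `A ⊗[B] A`), satisfying the cocycle condition `(id_A ⊗ θ) ∘ (θ ⊗ id_A) = θ₁₃` and the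
unit condition. -/
structure DescentDatum where
  M : ModuleCat.{u} A
  θ : ↥(res f M) ⊗[B] ↥(resA f) →ₗ[B] ↥(resA f) ⊗[B] ↥(res f M)
  compat : ∀ (a a' : A) (z : ↥(res f M) ⊗[B] ↥(resA f)),
    θ (actL f M a a' z) = actR f M a a' (θ z)
  cocycle :
    (TensorProduct.assoc B ↥(resA f) ↥(resA f) ↥(res f M)).toLinearMap ∘ₗ
        (swapAMA f M ∘ₗ θ.rTensor ↥(resA f) ∘ₗ swapMAA f M) =
      θ.lTensor ↥(resA f) ∘ₗ
        (TensorProduct.assoc B ↥(resA f) ↥(res f M) ↥(resA f)).toLinearMap ∘ₗ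
          θ.rTensor ↥(resA f)
  unit : ∀ m : ↥M,
    unitMap f M (θ ((m : ↥(res f M)) ⊗ₜ[B] ((1 : A) : ↥(resA f)))) = m

/-- Morphisms of descent data: an `A`-linear map `φ` such that
`(id_A ⊗ φ) ∘ θ = η ∘ (φ ⊗ id_A)`. -/
instance : Category (DescentDatum f) where
  Hom D D' := { φ : D.M ⟶ D'.M //
    LinearMap.lTensor ↥(resA f) ((ModuleCat.restrictScalars f).map φ).hom ∘ₗ D.θ =
      D'.θ ∘ₗ LinearMap.rTensor ↥(resA f) ((ModuleCat.restrictScalars f).map φ).hom }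
  id D := ⟨𝟙 D.M, by
    rw [CategoryTheory.Functor.map_id]
    show LinearMap.lTensor _ LinearMap.id ∘ₗ D.θ = D.θ ∘ₗ LinearMap.rTensor _ LinearMap.id
    rw [LinearMap.lTensor_id, LinearMap.rTensor_id, LinearMap.id_comp, LinearMap.comp_id]⟩
  comp {D D' D''} φ ψ := ⟨φ.1 ≫ ψ.1, by
    rw [CategoryTheory.Functor.map_comp]
    show LinearMap.lTensor _ (((ModuleCat.restrictScalars f).map ψ.1).hom.comp
        ((ModuleCat.restrictScalars f).map φ.1).hom) ∘ₗ D.θ =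
      D''.θ ∘ₗ LinearMap.rTensor _ (((ModuleCat.restrictScalars f).map ψ.1).hom.comp
        ((ModuleCat.restrictScalars f).map φ.1).hom)
    rw [LinearMap.lTensor_comp, LinearMap.rTensor_comp, LinearMap.comp_assoc, φ.2,
      ← LinearMap.comp_assoc, ψ.2, LinearMap.comp_assoc]⟩
  id_comp φ := Subtype.ext (Category.id_comp φ.1)
  comp_id φ := Subtype.ext (Category.comp_id φ.1)
  assoc φ ψ χ := Subtype.ext (Category.assoc φ.1 ψ.1 χ.1)


section Aux

/-- The base-change comonad. -/
abbrev TT : Comonad (ModuleCat.{u} A) := (ModuleCat.extendRestrictScalarsAdj.{u} f).toComonad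


/-- Identity map `A → ↥(resA f)`. -/
def ofA (a : A) : ↥(resA f) := a

variable (M : ModuleCat.{u} A)

/-- Identity map `↥M → ↥(res f M)`. -/
def ofM (m : ↥M) : ↥(res f M) := m

/-- Identity map `↥(res f M) → ↥M`. -/
def unM (m : ↥(res f M)) : ↥M := m


lemma toA_one : toA f ((1 : A) : ↥(resA f)) = 1 := rfl

lemma smulHom_apply (a : A) (m : ↥(res f M)) : smulHom f M a m = (a • m : ↥M) := rfl

lemma smulHom_one : smulHom f M (1 : A) = LinearMap.id :=
  LinearMap.ext fun m => one_smul A (m : ↥M)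

lemma mulHom_one : mulHom f (1 : A) = LinearMap.id :=
  LinearMap.ext fun x => one_mul (toA f x)

lemma actL_tmul (a a' : A) (m : ↥(res f M)) (x : ↥(resA f)) :
    actL f M a a' (m ⊗ₜ[B] x) =
      ofM f M (a • unM f M m) ⊗ₜ[B] ofA f (a' * toA f x) := rfl

lemma actR_tmul (a a' : A) (x : ↥(resA f)) (m : ↥(res f M)) :
    actR f M a a' (x ⊗ₜ[B] m) =
      ofA f (a * toA f x) ⊗ₜ[B] ofM f M (a' • unM f M m) := rfl

lemma actR_one (a : A) : actR f M 1 a = LinearMap.lTensor ↥(resA f) (smulHom f M a) := by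
  rw [actR, mulHom_one]; rfl

lemma unitMap_tmul (x : ↥(resA f)) (m : ↥(res f M)) :
    unitMap f M (x ⊗ₜ[B] m) = (toA f x • m : ↥M) := rfl

lemma swapMAA_tmul (m : ↥(res f M)) (x y : ↥(resA f)) :
    swapMAA f M ((m ⊗ₜ[B] x) ⊗ₜ[B] y) = (m ⊗ₜ[B] y) ⊗ₜ[B] x := by
  simp [swapMAA]

lemma swapAMA_tmul (x : ↥(resA f)) (m : ↥(res f M)) (y : ↥(resA f)) :
    swapAMA f M ((x ⊗ₜ[B] m) ⊗ₜ[B] y) = (x ⊗ₜ[B] y) ⊗ₜ[B] m := by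
  simp [swapAMA]

lemma smul_actR_one (a : A) (w : ↥(resA f) ⊗[B] ↥(res f M)) :
    actR f M a 1 w = @HSMul.hSMul A ↥((ModuleCat.extendScalars f).obj (res f M)) ↥((ModuleCat.extendScalars f).obj (res f M)) _ a w := by
  induction w using TensorProduct.induction_on with
  | zero => exact (map_zero _).trans (smul_zero (A := ↥((ModuleCat.extendScalars f).obj (res f M))) a).symm
  | tmul x m => rw [actR_tmul, one_smul]; rfl
  | add u v hu hv =>
    exact ((map_add _ u v).trans (congrArg₂ (· + ·) hu hv)).trans (smul_add (A := ↥((ModuleCat.extendScalars f).obj (res f M))) a u v).symm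

lemma key1 (a a' x : A) (w : ↥(resA f) ⊗[B] ↥(res f M)) :
    LinearMap.lTensor ↥(resA f) (smulHom f M (a' * x))
        (@HSMul.hSMul A ↥((ModuleCat.extendScalars f).obj (res f M)) ↥((ModuleCat.extendScalars f).obj (res f M)) _ a w) =
      actR f M a a' (LinearMap.lTensor ↥(resA f) (smulHom f M x) w) := by
  rw [← smul_actR_one]
  induction w using TensorProduct.induction_on with
  | zero => rw [map_zero, map_zero, map_zero, map_zero]
  | tmul y n =>
      rw [actR_tmul, LinearMap.lTensor_tmul, LinearMap.lTensor_tmul, actR_tmul]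
      exact congrArg (fun t => ofA f (a * toA f y) ⊗ₜ[B] t)
        (show (((a' * x) • ((1 : A) • unM f M n)) : ↥M) = a' • x • unM f M n by
          rw [one_smul, mul_smul])
  | add u v hu hv => rw [map_add, map_add, map_add, map_add, hu, hv]

lemma fb_smul (b : B) (z : ↥(resA f) ⊗[B] ↥(res f M)) :
    @HSMul.hSMul A ↥((ModuleCat.extendScalars f).obj (res f M)) ↥((ModuleCat.extendScalars f).obj (res f M)) _ (f b) z = b • z := rfl

/-- `n ↦ 1 ⊗ n`. -/
def oneTmul : ↥(res f M) →ₗ[B] ↥(resA f) ⊗[B] ↥(res f M) where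
  toFun n := ((1 : A) : ↥(resA f)) ⊗ₜ[B] n
  map_add' n n' := TensorProduct.tmul_add _ n n'
  map_smul' b n := TensorProduct.tmul_smul b _ n

lemma delta_eq (w : ↥(resA f) ⊗[B] ↥(res f M)) :
    (TT f).δ.app M w = LinearMap.lTensor ↥(resA f) (oneTmul f M) w := by
  induction w using TensorProduct.induction_on with
  | zero => exact (map_zero _).trans (map_zero _).symm
  | tmul x n => rfl
  | add u v hu hv => exact ((map_add _ u v).trans (congrArg₂ (· + ·) hu hv)).trans (map_add _ u v).symm

lemma eps_eq (w : ↥(resA f) ⊗[B] ↥(res f M)) :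
    (TT f).ε.app M w = unitMap f M w := by
  induction w using TensorProduct.induction_on with
  | zero => exact (map_zero _).trans (map_zero _).symm
  | tmul x n => rfl
  | add u v hu hv => exact ((map_add _ u v).trans (congrArg₂ (· + ·) hu hv)).trans (map_add _ u v).symm

lemma tmap_eq {N : ModuleCat.{u} A} (φ : M ⟶ N) (w : ↥(resA f) ⊗[B] ↥(res f M)) :
    (TT f).map φ w =
      LinearMap.lTensor ↥(resA f) ((ModuleCat.restrictScalars f).map φ).hom w := by
  induction w using TensorProduct.induction_on with
  | zero => exact (map_zero _).trans (map_zero _).symm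
  | tmul x n => rfl
  | add u v hu hv => exact ((map_add _ u v).trans (congrArg₂ (· + ·) hu hv)).trans (map_add _ u v).symm

end Aux

section Main

lemma toA_ofA (a : A) : toA f (ofA f a) = a := rfl

lemma ofA_toA (x : ↥(resA f)) : ofA f (toA f x) = x := rfl

variable (M : ModuleCat.{u} A)

lemma unM_ofM (m : ↥M) : unM f M (ofM f M m) = m := rfl

lemma oneTmul_apply (n : ↥(res f M)) :
    oneTmul f M n = ofA f 1 ⊗ₜ[B] n := rfl

lemma unM_smulHom (a : A) (n : ↥(res f M)) :
    unM f M (smulHom f M a n) = a • unM f M n := rfl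

/-- The coaction attached to a descent datum. -/
def coact (D : DescentDatum f) : D.M ⟶ (TT f).obj D.M :=
    ModuleCat.ofHom (X := ↥D.M) (Y := ↥((TT f).obj D.M)) {
  toFun m := D.θ ((m : ↥(res f D.M)) ⊗ₜ[B] ((1 : A) : ↥(resA f)))
  map_add' m m' := by
    exact (congrArg D.θ (TensorProduct.add_tmul (ofM f D.M m) (ofM f D.M m') _)).trans (map_add D.θ _ _)
  map_smul' a m := by
    rw [RingHom.id_apply]
    have h := D.compat a 1 (ofM f D.M m ⊗ₜ[B] ofA f 1)
    rw [actL_tmul, toA_ofA, mul_one, smul_actR_one] at h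
    exact h }

lemma coact_counit (D : DescentDatum f) : coact f D ≫ (TT f).ε.app D.M = 𝟙 D.M :=
  ModuleCat.hom_ext <| LinearMap.ext fun m => by
    show (TT f).ε.app D.M (coact f D m) = m
    erw [eps_eq]
    exact D.unit m

lemma lemA (D : DescentDatum f) (w : ↥(resA f) ⊗[B] ↥(res f D.M)) :
    (TensorProduct.assoc B ↥(resA f) ↥(resA f) ↥(res f D.M)).toLinearMap
        (swapAMA f D.M (w ⊗ₜ[B] ofA f 1)) =
      LinearMap.lTensor ↥(resA f) (oneTmul f D.M) w := by
  induction w using TensorProduct.induction_on with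
  | zero => rw [TensorProduct.zero_tmul, map_zero, map_zero, map_zero]
  | tmul x n => rw [swapAMA_tmul]; rfl
  | add u v hu hv =>
      rw [TensorProduct.add_tmul, map_add, map_add, map_add, hu, hv]

lemma lemB (θ : ↥(res f M) ⊗[B] ↥(resA f) →ₗ[B] ↥(resA f) ⊗[B] ↥(res f M))
    (ρB : ↥(res f M) →ₗ[B] ↥(resA f) ⊗[B] ↥(res f M))
    (h : ∀ n : ↥(res f M), θ (n ⊗ₜ[B] ofA f 1) = ρB n)
    (w : ↥(resA f) ⊗[B] ↥(res f M)) :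
    LinearMap.lTensor ↥(resA f) θ
        ((TensorProduct.assoc B ↥(resA f) ↥(res f M) ↥(resA f)).toLinearMap
          (w ⊗ₜ[B] ofA f 1)) =
      LinearMap.lTensor ↥(resA f) ρB w := by
  induction w using TensorProduct.induction_on with
  | zero => rw [TensorProduct.zero_tmul, map_zero, map_zero, map_zero]
  | tmul x n =>
      show LinearMap.lTensor ↥(resA f) θ
          (x ⊗ₜ[B] (n ⊗ₜ[B] ofA f 1)) = _
      rw [LinearMap.lTensor_tmul, LinearMap.lTensor_tmul, h]
  | add u v hu hv =>
      rw [TensorProduct.add_tmul, map_add, map_add, map_add, hu, hv]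

lemma coact_coassoc (D : DescentDatum f) :
    coact f D ≫ (TT f).δ.app D.M = coact f D ≫ (TT f).map (coact f D) :=
  ModuleCat.hom_ext <| LinearMap.ext fun m => by
    show (TT f).δ.app D.M (coact f D m) = (TT f).map (coact f D) (coact f D m)
    erw [delta_eq f D.M (coact f D m), tmap_eq f D.M (coact f D) (coact f D m)]
    have hc := LinearMap.congr_fun D.cocycle
      ((ofM f D.M m ⊗ₜ[B] ofA f 1) ⊗ₜ[B] ofA f 1)
    simp only [LinearMap.comp_apply] at hc
    rw [swapMAA_tmul, LinearMap.rTensor_tmul, lemA,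
      lemB f D.M D.θ ((ModuleCat.restrictScalars f).map (coact f D)).hom (fun n => rfl)] at hc
    exact hc

/-- The coalgebra attached to a descent datum. -/
def Eobj (D : DescentDatum f) : (TT f).Coalgebra where
  A := D.M
  a := coact f D
  counit := coact_counit f D
  coassoc := coact_coassoc f D

/-- The functor from descent data to comonad coalgebras. -/
def Efunc : DescentDatum f ⥤ (TT f).Coalgebra where
  obj := Eobj f
  map {D D'} φ :=
    { f := φ.1
      h := ModuleCat.hom_ext <| LinearMap.ext fun m => by
        show (TT f).map φ.1 (coact f D m) = coact f D' (φ.1 m)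
        erw [tmap_eq]
        have h := LinearMap.congr_fun φ.2
          ((m : ↥(res f D.M)) ⊗ₜ[B] ((1 : A) : ↥(resA f)))
        simp only [LinearMap.comp_apply, LinearMap.rTensor_tmul] at h
        exact h }
  map_id D := by apply Comonad.Coalgebra.Hom.ext; rfl
  map_comp φ ψ := by apply Comonad.Coalgebra.Hom.ext; rfl

end Main

section Inv

variable (M : ModuleCat.{u} A)

/-- The descent map attached to a coaction. -/
def coactθ (ρ : M ⟶ (TT f).obj M) :
    ↥(res f M) ⊗[B] ↥(resA f) →ₗ[B] ↥(resA f) ⊗[B] ↥(res f M) :=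
  TensorProduct.lift
    { toFun := fun m =>
        { toFun := fun x =>
            LinearMap.lTensor ↥(resA f) (smulHom f M (toA f x)) (ρ (unM f M m))
          map_add' := fun x y => by
            show LinearMap.lTensor ↥(resA f) (smulHom f M (toA f (x + y)))
                (ρ (unM f M m)) =
              LinearMap.lTensor ↥(resA f) (smulHom f M (toA f x)) (ρ (unM f M m)) +
                LinearMap.lTensor ↥(resA f) (smulHom f M (toA f y)) (ρ (unM f M m))
            have h : smulHom f M (toA f (x + y)) =
                smulHom f M (toA f x) + smulHom f M (toA f y) :=
              LinearMap.ext fun n => add_smul (toA f x) (toA f y) (unM f M n)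
            erw [h, LinearMap.lTensor_add, LinearMap.add_apply]
          map_smul' := fun b x => by
            show LinearMap.lTensor ↥(resA f) (smulHom f M (toA f (b • x)))
                (ρ (unM f M m)) =
              b • LinearMap.lTensor ↥(resA f) (smulHom f M (toA f x)) (ρ (unM f M m))
            have h : smulHom f M (toA f (b • x)) = b • smulHom f M (toA f x) :=
              LinearMap.ext fun n => mul_smul (f b) (toA f x) (unM f M n)
            erw [h, LinearMap.lTensor_smul, LinearMap.smul_apply] }
      map_add' := fun m m' => LinearMap.ext fun x => by
        show LinearMap.lTensor ↥(resA f) (smulHom f M (toA f x))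
            (ρ (unM f M (m + m'))) =
          LinearMap.lTensor ↥(resA f) (smulHom f M (toA f x)) (ρ (unM f M m)) +
            LinearMap.lTensor ↥(resA f) (smulHom f M (toA f x)) (ρ (unM f M m'))
        have h : ρ (unM f M (m + m')) = ρ (unM f M m) + ρ (unM f M m') :=
          ρ.hom.map_add (unM f M m) (unM f M m')
        erw [h, map_add]
      map_smul' := fun b m => LinearMap.ext fun x => by
        show LinearMap.lTensor ↥(resA f) (smulHom f M (toA f x))
            (ρ (unM f M ((b • m : ↥(res f M))))) =
          b • LinearMap.lTensor ↥(resA f) (smulHom f M (toA f x)) (ρ (unM f M m))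
        have h : ρ (unM f M ((b • m : ↥(res f M)))) =
            (f b • ρ (unM f M m) : ↥((ModuleCat.extendScalars f).obj (res f M))) :=
          ρ.hom.map_smul (f b) (unM f M m)
        erw [h, fb_smul, map_smul] }

lemma coactθ_tmul (ρ : M ⟶ (TT f).obj M) (m : ↥(res f M)) (x : ↥(resA f)) :
    coactθ f M ρ (m ⊗ₜ[B] x) =
      LinearMap.lTensor ↥(resA f) (smulHom f M (toA f x)) (ρ (unM f M m)) := rfl

lemma C1 (a' : A) (x : ↥(resA f)) (w : ↥(resA f) ⊗[B] ↥(res f M)) :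
    (TensorProduct.assoc B ↥(resA f) ↥(resA f) ↥(res f M)).toLinearMap
        (swapAMA f M ((LinearMap.lTensor ↥(resA f) (smulHom f M a') w) ⊗ₜ[B] x)) =
      LinearMap.lTensor ↥(resA f) (actR f M (toA f x) a')
        (LinearMap.lTensor ↥(resA f) (oneTmul f M) w) := by
  induction w using TensorProduct.induction_on with
  | zero => rw [map_zero, TensorProduct.zero_tmul, map_zero, map_zero, map_zero, map_zero]
  | tmul y n =>
      rw [LinearMap.lTensor_tmul, swapAMA_tmul, LinearMap.lTensor_tmul,
        LinearMap.lTensor_tmul, oneTmul_apply, actR_tmul, toA_ofA, mul_one]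
      rfl
  | add u v hu hv => simp only [map_add, TensorProduct.add_tmul, hu, hv]

lemma C2 (ρ : M ⟶ (TT f).obj M) (a : A) (y : ↥(resA f))
    (w : ↥(resA f) ⊗[B] ↥(res f M)) :
    LinearMap.lTensor ↥(resA f) (coactθ f M ρ)
        ((TensorProduct.assoc B ↥(resA f) ↥(res f M) ↥(resA f)).toLinearMap
          ((LinearMap.lTensor ↥(resA f) (smulHom f M a) w) ⊗ₜ[B] y)) =
      LinearMap.lTensor ↥(resA f) (actR f M a (toA f y))
        (LinearMap.lTensor ↥(resA f) ((ModuleCat.restrictScalars f).map ρ).hom w) := by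
  induction w using TensorProduct.induction_on with
  | zero => simp only [map_zero, TensorProduct.zero_tmul]; exact (map_zero _).symm
  | tmul z n =>
      show LinearMap.lTensor ↥(resA f) (coactθ f M ρ)
          (z ⊗ₜ[B] ((smulHom f M a n) ⊗ₜ[B] y)) = _
      rw [LinearMap.lTensor_tmul, coactθ_tmul, unM_smulHom]
      have h : ρ (a • unM f M n) =
          (a • ρ (unM f M n) : ↥((ModuleCat.extendScalars f).obj (res f M))) :=
        ρ.hom.map_smul a (unM f M n)
      erw [h, ← mul_one (toA f y), key1 f M a (toA f y) 1 (ρ (unM f M n)), mul_one, smulHom_one, LinearMap.lTensor_id,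
        LinearMap.id_apply (R := B)]
      rfl
  | add u v hu hv =>
    simp only [map_add, TensorProduct.add_tmul, hu, hv]
    exact (map_add (LinearMap.lTensor ↥(resA f) (actR f M a (toA f y))) _ _).symm

/-- The descent datum attached to a coalgebra. -/
def coalgDD (P : (TT f).Coalgebra) : DescentDatum f where
  M := P.A
  θ := coactθ f P.A P.a
  compat := fun a a' z => by
    induction z using TensorProduct.induction_on with
    | zero => rw [map_zero, map_zero, map_zero]
    | tmul m x =>
        rw [actL_tmul, coactθ_tmul, coactθ_tmul, toA_ofA, unM_ofM]
        have h1 : P.a (a • unM f P.A m) =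
            (a • P.a (unM f P.A m) : ↥((ModuleCat.extendScalars f).obj (res f P.A))) :=
          P.a.hom.map_smul a (unM f P.A m)
        erw [h1, key1 f P.A a a' (toA f x) (P.a (unM f P.A m))]
    | add u v hu hv => simp only [map_add, hu, hv]
  cocycle := by
    apply TensorProduct.ext'
    intro z y
    induction z using TensorProduct.induction_on with
    | zero => rw [TensorProduct.zero_tmul, map_zero, map_zero]
    | tmul m x =>
        simp only [LinearMap.comp_apply]
        rw [swapMAA_tmul, LinearMap.rTensor_tmul, coactθ_tmul]
        erw [C1 f P.A (toA f y) x (P.a (unM f P.A m))]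
        rw [LinearMap.rTensor_tmul, coactθ_tmul]
        erw [C2 f P.A P.a (toA f x) y (P.a (unM f P.A m))]
        have hco : (TT f).δ.app P.A (P.a (unM f P.A m)) =
            (TT f).map P.a (P.a (unM f P.A m)) :=
          LinearMap.congr_fun (congrArg ModuleCat.Hom.hom P.coassoc) (unM f P.A m)
        erw [delta_eq f P.A (P.a (unM f P.A m)), tmap_eq f P.A P.a (P.a (unM f P.A m))] at hco
        rw [hco]
    | add u v hu hv => simp only [TensorProduct.add_tmul, map_add, hu, hv]
  unit := fun m => by
    erw [coactθ_tmul f P.A P.a m ((1 : A) : ↥(resA f))]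
    rw [toA_one, smulHom_one, LinearMap.lTensor_id]
    erw [LinearMap.id_apply (R := B)]
    have h : (TT f).ε.app P.A (P.a (unM f P.A (m : ↥(res f P.A)))) = m :=
      LinearMap.congr_fun (congrArg ModuleCat.Hom.hom P.counit) m
    erw [eps_eq f P.A (P.a (unM f P.A (m : ↥(res f P.A))))] at h
    exact h

private lemma coalg_hext {C : Type (u + 1)} [Category.{u} C] {G : Comonad C}
    (P Q : G.Coalgebra) (h1 : P.A = Q.A) (h2 : HEq P.a Q.a) : P = Q := by
  cases P; cases Q; cases h1; cases h2; rfl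

lemma Eobj_coalgDD (P : (TT f).Coalgebra) : Eobj f (coalgDD f P) = P := by
  have h : coact f (coalgDD f P) = P.a := ModuleCat.hom_ext <| LinearMap.ext fun m => by
    show coactθ f P.A P.a ((m : ↥(res f P.A)) ⊗ₜ[B] ((1 : A) : ↥(resA f))) = P.a m
    erw [coactθ_tmul f P.A P.a m ((1 : A) : ↥(resA f))]
    rw [toA_one, smulHom_one, LinearMap.lTensor_id]
    erw [LinearMap.id_apply (R := B)]
  exact coalg_hext _ _ rfl (heq_of_eq h)

end Inv

section Equiv

lemma thetaone (D : DescentDatum f) (m : ↥(res f D.M)) (x : ↥(resA f)) :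
    D.θ (m ⊗ₜ[B] x) =
      actR f D.M 1 (toA f x) (D.θ (m ⊗ₜ[B] ((1 : A) : ↥(resA f)))) := by
  have h := D.compat 1 (toA f x) (m ⊗ₜ[B] ofA f 1)
  rw [actL_tmul, toA_ofA, mul_one] at h
  have e1 : ofM f D.M ((1 : A) • unM f D.M m) = m := one_smul A (unM f D.M m)
  rw [e1, ofA_toA] at h
  exact h

lemma lTensor_actR_one {M N : ModuleCat.{u} A} (ψ : M ⟶ N) (a : A)
    (w : ↥(resA f) ⊗[B] ↥(res f M)) :
    LinearMap.lTensor ↥(resA f) ((ModuleCat.restrictScalars f).map ψ).hom (actR f M 1 a w) =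
      actR f N 1 a
        (LinearMap.lTensor ↥(resA f) ((ModuleCat.restrictScalars f).map ψ).hom w) := by
  induction w using TensorProduct.induction_on with
  | zero => simp only [map_zero]
  | tmul x n =>
      rw [actR_tmul, LinearMap.lTensor_tmul, LinearMap.lTensor_tmul, actR_tmul]
      exact congrArg (fun t => ofA f (1 * toA f x) ⊗ₜ[B] t)
        (show (ModuleCat.restrictScalars f).map ψ (ofM f M (a • unM f M n)) =
            ofM f N (a • unM f N ((ModuleCat.restrictScalars f).map ψ n)) from
          ψ.hom.map_smul a (unM f M n))
  | add u v hu hv => simp only [map_add, hu, hv]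

instance Efaithful : (Efunc f).Faithful where
  map_injective := fun {_ _} {_ _} h =>
    Subtype.ext (congrArg Comonad.Coalgebra.Hom.f h)

instance Efull : (Efunc f).Full where
  map_surjective := fun {D D'} g => by
    refine ⟨⟨g.f, ?_⟩, by apply Comonad.Coalgebra.Hom.ext; rfl⟩
    apply TensorProduct.ext'
    intro m x
    simp only [LinearMap.comp_apply, LinearMap.rTensor_tmul]
    rw [thetaone f D m x]
    erw [lTensor_actR_one]
    have hg : (TT f).map g.f (coact f D m) = coact f D' (g.f m) :=
      LinearMap.congr_fun (congrArg ModuleCat.Hom.hom g.h) m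
    erw [tmap_eq] at hg
    exact (congrArg (fun t => actR f D'.M 1 (toA f x) t) hg).trans
      (thetaone f D' (((ModuleCat.restrictScalars f).map g.f) m) x).symm

instance EessSurj : (Efunc f).EssSurj where
  mem_essImage := fun P => ⟨coalgDD f P, ⟨eqToIso (Eobj_coalgDD f P)⟩⟩

lemma Eequiv : (Efunc f).IsEquivalence where
  faithful := Efaithful f
  full := Efull f
  essSurj := EessSurj f

end Equiv

/-- **Descent data versus comonad coalgebras.**  For a homomorphism `f : B → A` of
commutative rings, the category of descent data for `f` is equivalent to the category of
coalgebras over the base-change comonad on `ModuleCat A` induced by the adjunction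
`extendScalars f ⊣ restrictScalars f`.  The equivalence sends a descent datum `(M, θ)` to
the `A`-module `M` equipped with the coaction `m ↦ θ (m ⊗ 1)` (the composite of
`m ↦ m ⊗ 1 : M → M ⊗[B] A` with `θ`), and acts as the identity on underlying `A`-linear
maps. -/
theorem descentData_equiv_comonad_coalgebras :
    ∃ (E : DescentDatum f ⥤ (ModuleCat.extendRestrictScalarsAdj.{u} f).toComonad.Coalgebra)
      (hobj : ∀ D : DescentDatum f, (E.obj D).A = D.M),
      E.IsEquivalence ∧
        (∀ (D : DescentDatum f) (m : ↥D.M),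
          (eqToHom (hobj D).symm ≫ (E.obj D).a ≫
              eqToHom (show ((ModuleCat.extendRestrictScalarsAdj.{u} f).toComonad).obj
                    (E.obj D).A =
                  ((ModuleCat.extendRestrictScalarsAdj.{u} f).toComonad).obj D.M by
                rw [hobj D])) m =
            D.θ ((m : ↥(res f D.M)) ⊗ₜ[B] ((1 : A) : ↥(resA f)))) ∧
        (∀ (D D' : DescentDatum f) (φ : D ⟶ D'),
          eqToHom (hobj D).symm ≫ (E.map φ).f ≫ eqToHom (hobj D') = φ.1) := by
  refine ⟨Efunc f, fun _ => rfl, Eequiv f, fun D m => ?_, fun D D' φ => ?_⟩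
  · rfl
  · rfl


end

end ModuleDescent
end

section
/- Let C : SimplexCategory ⥤ Cat be a cosimplicial object in the category of small categories, with coface functors dⁱ := C(δⁱ) and codegeneracy functors sⁱ := C(σⁱ). Let M be an object of C[0] and let θ : d¹M ≅ d⁰M be an isomorphism in C[1] satisfying the cocycle condition d⁰(θ) ∘ d²(θ) = d¹(θ), as morphisms d²d¹M → d⁰d⁰M under the canonical identifications d²d¹ = d¹d¹, d²d⁰ = d⁰d¹, and d¹d⁰ = d⁰d⁰ coming from the cosimplicial identities. Then s⁰(θ) is the identity morphism of M, under the canonical identifications s⁰d¹ = id and s⁰d⁰ = id. -/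
open CategoryTheory SimplexCategory Simplicial

namespace CosimplicialCatCocycle

universe v u

variable (C : SimplexCategory ⥤ Cat.{v, u})

/-- Canonical identification of iterated coface/codegeneracy functors coming from an
equality of maps in the simplex category. -/
theorem map_comp_obj_eq {x y z : SimplexCategory} {φ : x ⟶ y} {ψ : y ⟶ z} {φψ : x ⟶ z}
    (h : φ ≫ ψ = φψ) (M : C.obj x) :
    (C.map ψ).toFunctor.obj ((C.map φ).toFunctor.obj M) = (C.map φψ).toFunctor.obj M := by
  subst h; rw [C.map_comp]; rfl

theorem map_obj_eq_of_id {x : SimplexCategory} {φ : x ⟶ x} (h : φ = 𝟙 x) (M : C.obj x) :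
    (C.map φ).toFunctor.obj M = M := by
  subst h; rw [C.map_id]; rfl

theorem map_map {x y z : SimplexCategory} (φ : x ⟶ y) (ψ : y ⟶ z) {A B : C.obj x} (f : A ⟶ B) :
    (C.map ψ).toFunctor.map ((C.map φ).toFunctor.map f) =
      eqToHom (map_comp_obj_eq C rfl A) ≫ (C.map (φ ≫ ψ)).toFunctor.map f ≫
        eqToHom (map_comp_obj_eq C rfl B).symm := by
  have h := Functor.congr_hom (congrArg Cat.Hom.toFunctor (C.map_comp φ ψ)) f
  simp [h]

theorem map_eq_of_eq {x y : SimplexCategory} {φ ψ : x ⟶ y} (h : φ = ψ) {A B : C.obj x}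
    (f : A ⟶ B) :
    (C.map φ).toFunctor.map f = eqToHom (by rw [h]) ≫ (C.map ψ).toFunctor.map f ≫ eqToHom (by rw [h]) := by
  subst h; simp

theorem map_id_map {x : SimplexCategory} {φ : x ⟶ x} (h : φ = 𝟙 x) {A B : C.obj x} (f : A ⟶ B) :
    (C.map φ).toFunctor.map f = eqToHom (map_obj_eq_of_id C h A) ≫ f ≫
      eqToHom (map_obj_eq_of_id C h B).symm := by
  subst h
  have := Functor.congr_hom (congrArg Cat.Hom.toFunctor (C.map_id x)) f
  simpa using this

theorem map_map_eq {x y z w : SimplexCategory} (φ : x ⟶ y) (ψ : y ⟶ z) (φ' : x ⟶ w)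
    (ψ' : w ⟶ z) (h : φ ≫ ψ = φ' ≫ ψ') {A B : C.obj x} (f : A ⟶ B) :
    (C.map ψ).toFunctor.map ((C.map φ).toFunctor.map f) =
      eqToHom ((map_comp_obj_eq C h A).trans (map_comp_obj_eq C rfl A).symm) ≫
        (C.map ψ').toFunctor.map ((C.map φ').toFunctor.map f) ≫
        eqToHom ((map_comp_obj_eq C h B).trans (map_comp_obj_eq C rfl B).symm).symm := by
  rw [map_map, map_map, map_eq_of_eq C h]
  simp

theorem map_map_id {x y : SimplexCategory} (φ : x ⟶ y) (ψ : y ⟶ x) (h : φ ≫ ψ = 𝟙 x)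
    {A B : C.obj x} (f : A ⟶ B) :
    (C.map ψ).toFunctor.map ((C.map φ).toFunctor.map f) =
      eqToHom ((map_comp_obj_eq C rfl A).trans (map_obj_eq_of_id C h A)) ≫ f ≫
        eqToHom ((map_comp_obj_eq C rfl B).trans (map_obj_eq_of_id C h B)).symm := by
  rw [map_map, map_id_map C h]
  simp

theorem d2s0 : (δ 2 ≫ σ 0 : (⦋1⦌:SimplexCategory) ⟶ ⦋1⦌) = σ 0 ≫ δ 1 := by
  have h := δ_comp_σ_of_gt' (n := 0) (i := 2) (j := 0) (by decide)
  rw [h]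
  rfl

/-- The canonical identification `d² d¹ M = d¹ d¹ M` (from `δ¹ ≫ δ² = δ¹ ≫ δ¹`). -/
theorem e21 (M : C.obj ⦋0⦌) :
    (C.map (δ 2)).toFunctor.obj ((C.map (δ 1)).toFunctor.obj M) = (C.map (δ 1)).toFunctor.obj ((C.map (δ 1)).toFunctor.obj M) :=
  (map_comp_obj_eq C (SimplexCategory.δ_comp_δ (n := 0) (i := 1) (j := 1) le_rfl) M).trans
    (map_comp_obj_eq C (φ := δ 1) (ψ := δ 1) rfl M).symm

/-- The canonical identification `d² d⁰ M = d⁰ d¹ M` (from `δ⁰ ≫ δ² = δ¹ ≫ δ⁰`). -/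
theorem e20 (M : C.obj ⦋0⦌) :
    (C.map (δ 2)).toFunctor.obj ((C.map (δ 0)).toFunctor.obj M) = (C.map (δ 0)).toFunctor.obj ((C.map (δ 1)).toFunctor.obj M) :=
  (map_comp_obj_eq C (SimplexCategory.δ_comp_δ (n := 0) (i := 0) (j := 1) (by decide)) M).trans
    (map_comp_obj_eq C (φ := δ 1) (ψ := δ 0) rfl M).symm

/-- The canonical identification `d¹ d⁰ M = d⁰ d⁰ M` (from `δ⁰ ≫ δ¹ = δ⁰ ≫ δ⁰`). -/
theorem e10 (M : C.obj ⦋0⦌) :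
    (C.map (δ 1)).toFunctor.obj ((C.map (δ 0)).toFunctor.obj M) = (C.map (δ 0)).toFunctor.obj ((C.map (δ 0)).toFunctor.obj M) :=
  (map_comp_obj_eq C (SimplexCategory.δ_comp_δ (n := 0) (i := 0) (j := 0) le_rfl) M).trans
    (map_comp_obj_eq C (φ := δ 0) (ψ := δ 0) rfl M).symm

/-- The canonical identification `s⁰ d¹ M = M` (from `δ¹ ≫ σ⁰ = id`). -/
theorem es1 (M : C.obj ⦋0⦌) :
    (C.map (σ 0)).toFunctor.obj ((C.map (δ 1)).toFunctor.obj M) = M :=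
  (map_comp_obj_eq C (SimplexCategory.δ_comp_σ_succ (n := 0) (i := 0)) M).trans
    (map_obj_eq_of_id C rfl M)

/-- The canonical identification `s⁰ d⁰ M = M` (from `δ⁰ ≫ σ⁰ = id`). -/
theorem es0 (M : C.obj ⦋0⦌) :
    (C.map (σ 0)).toFunctor.obj ((C.map (δ 0)).toFunctor.obj M) = M :=
  (map_comp_obj_eq C (SimplexCategory.δ_comp_σ_self (n := 0) (i := 0)) M).trans
    (map_obj_eq_of_id C rfl M)

/-- For a cosimplicial object `C` in `Cat`, an object `M` of `C⦋0⦌` and an isomorphism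
`θ : d¹M ≅ d⁰M` in `C⦋1⦌` satisfying the cocycle condition `d⁰(θ) ∘ d²(θ) = d¹(θ)`
(under the canonical identifications coming from the cosimplicial identities), the
codegeneracy functor `s⁰` sends `θ` to the identity of `M` (under the canonical
identifications `s⁰d¹ = id` and `s⁰d⁰ = id`). -/
theorem codegeneracy_of_cocycle (C : SimplexCategory ⥤ Cat.{v, u}) (M : C.obj ⦋0⦌)
    (θ : (C.map (δ 1)).toFunctor.obj M ≅ (C.map (δ 0)).toFunctor.obj M)
    (cocycle :
      (C.map (δ 2)).toFunctor.map θ.hom ≫ eqToHom (e20 C M) ≫ (C.map (δ 0)).toFunctor.map θ.hom =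
        eqToHom (e21 C M) ≫ (C.map (δ 1)).toFunctor.map θ.hom ≫ eqToHom (e10 C M)) :
    eqToHom (es1 C M).symm ≫ (C.map (σ 0)).toFunctor.map θ.hom ≫ eqToHom (es0 C M) = 𝟙 M := by
  have key := congrArg (C.map (σ 0 : (⦋2⦌:SimplexCategory) ⟶ ⦋1⦌)).toFunctor.map cocycle
  simp only [Functor.map_comp, eqToHom_map] at key
  rw [map_map_eq C (δ 2) (σ 0) (σ 0) (δ 1) d2s0 θ.hom,
    map_map_id C (δ 0) (σ 0) (δ_comp_σ_self' (n := 1) (i := 0) (by decide)) θ.hom,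
    map_map_id C (δ 1) (σ 0) (δ_comp_σ_succ' (n := 1) (i := 0) (by decide)) θ.hom] at key
  simp only [Category.assoc, eqToHom_trans, eqToHom_trans_assoc] at key
  have key2 := congrArg (C.map (σ 0 : (⦋1⦌:SimplexCategory) ⟶ ⦋0⦌)).toFunctor.map key
  simp only [Functor.map_comp, eqToHom_map] at key2
  rw [map_map_id C (δ 1) (σ 0) (δ_comp_σ_succ' (n := 0) (i := 0) (by decide))
    ((C.map (σ 0)).toFunctor.map θ.hom)] at key2
  simp only [Category.assoc, eqToHom_trans, eqToHom_trans_assoc] at key2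
  haveI : IsIso ((C.map (σ 0 : (⦋1⦌:SimplexCategory) ⟶ ⦋0⦌)).toFunctor.map θ.hom) := inferInstance
  have hu : (C.map (σ 0)).toFunctor.obj ((C.map (σ 0)).toFunctor.obj ((C.map (δ 2)).toFunctor.obj ((C.map (δ 1)).toFunctor.obj M))) = M := by
    rw [e21 C M, map_comp_obj_eq C (δ_comp_σ_succ' (n := 1) (i := 0) (by decide)),
      map_obj_eq_of_id C rfl, es1 C M]
  have hv : (C.map (σ 0)).toFunctor.obj ((C.map (σ 0)).toFunctor.obj ((C.map (δ 0)).toFunctor.obj ((C.map (δ 0)).toFunctor.obj M))) = M := by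
    rw [map_comp_obj_eq C (δ_comp_σ_self' (n := 1) (i := 0) (by decide)),
      map_obj_eq_of_id C rfl, es0 C M]
  have key3 : (eqToHom (es1 C M).symm ≫ (C.map (σ 0)).toFunctor.map θ.hom ≫ eqToHom (es0 C M)) ≫
      (eqToHom (es1 C M).symm ≫ (C.map (σ 0)).toFunctor.map θ.hom ≫ eqToHom (es0 C M)) =
      eqToHom (es1 C M).symm ≫ (C.map (σ 0)).toFunctor.map θ.hom ≫ eqToHom (es0 C M) := by
    have h := congrArg (fun t => eqToHom hu.symm ≫ t ≫ eqToHom hv) key2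
    simpa only [Category.assoc, eqToHom_trans, eqToHom_trans_assoc] using h
  rw [← cancel_epi (eqToHom (es1 C M).symm ≫ (C.map (σ 0)).toFunctor.map θ.hom ≫ eqToHom (es0 C M)),
    Category.comp_id, key3]

end CosimplicialCatCocycle
end

section
/- Let I : SimplexCategory ⥤ Cat be the functor sending [n] to the indiscrete groupoid on the set {0, 1, ..., n} (exactly one morphism between any two objects), with functoriality induced by the maps on objects, and let C : SimplexCategory ⥤ Cat be any cosimplicial object in Cat, with coface functors dⁱ := C(δⁱ). Then natural transformations I ⟶ C are in bijection with pairs (M, θ), where M is an object of C[0] and θ : d¹M ≅ d⁰M is an isomorphism in C[1] satisfying the cocycle condition d⁰(θ) ∘ d²(θ) = d¹(θ) (as morphisms d²d¹M → d⁰d⁰M under the canonical identifications coming from the cosimplicial identities). The bijection sends a natural transformation φ to the pair consisting of M = φ_{[0]}(0) and θ = φ_{[1]} applied to the unique morphism 0 → 1 of I[1]. -/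
open CategoryTheory SimplexCategory Simplicial

namespace IndiscreteCosimplicial

universe v u

/-- The indiscrete groupoid on a type `S`: the objects are the elements of `S` and there is
exactly one morphism between any two objects. -/
def Indiscrete (S : Type u) : Type u := S

instance (S : Type u) : Category.{v} (Indiscrete S) where
  Hom _ _ := PUnit
  id _ := ⟨⟩
  comp _ _ := ⟨⟩

/-- The cosimplicial object `I` in `Cat` sending `[n]` to the indiscrete groupoid on the
set `{0, 1, ..., n}`, with functoriality induced by the maps on objects. -/
def I : SimplexCategory ⥤ Cat.{v, u} where
  obj n := Cat.of (Indiscrete (ULift.{u} (Fin (n.len + 1))))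
  map φ :=
    { toFunctor :=
      { obj := fun i => ⟨φ.toOrderHom i.down⟩
        map := fun _ => ⟨⟩ } }

/-- The object of `I[n]` corresponding to `i ∈ {0, ..., n}`. -/
def pt {n : SimplexCategory} (i : Fin (n.len + 1)) : (I.{v, u}.obj n) := ⟨i⟩

theorem map_comp_obj_eq (C : SimplexCategory ⥤ Cat.{v, u}) {x y z : SimplexCategory}
    {φ : x ⟶ y} {ψ : y ⟶ z} {φψ : x ⟶ z} (h : φ ≫ ψ = φψ) (M : C.obj x) :
    (C.map ψ).toFunctor.obj ((C.map φ).toFunctor.obj M) = (C.map φψ).toFunctor.obj M := by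
  subst h; rw [C.map_comp]; rfl

/-- A pair `(M, θ)` consisting of an object `M` of `C[0]` and an isomorphism
`θ : d¹M ≅ d⁰M` satisfying the cocycle condition `d⁰(θ) ∘ d²(θ) = d¹(θ)` (under the
canonical identifications coming from the cosimplicial identities). -/
structure CocyclePair (C : SimplexCategory ⥤ Cat.{v, u}) where
  M : C.obj ⦋0⦌
  θ : (C.map (δ 1)).toFunctor.obj M ≅ (C.map (δ 0)).toFunctor.obj M
  cocycle :
    (C.map (δ 2)).toFunctor.map θ.hom ≫
        eqToHom ((map_comp_obj_eq C
            (SimplexCategory.δ_comp_δ (n := 0) (i := 0) (j := 1) (by decide)) M).trans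
          (map_comp_obj_eq C (φ := δ 1) (ψ := δ 0) rfl M).symm) ≫
      (C.map (δ 0)).toFunctor.map θ.hom =
    eqToHom ((map_comp_obj_eq C
          (SimplexCategory.δ_comp_δ (n := 0) (i := 1) (j := 1) le_rfl) M).trans
        (map_comp_obj_eq C (φ := δ 1) (ψ := δ 1) rfl M).symm) ≫
      (C.map (δ 1)).toFunctor.map θ.hom ≫
        eqToHom ((map_comp_obj_eq C
            (SimplexCategory.δ_comp_δ (n := 0) (i := 0) (j := 0) le_rfl) M).trans
          (map_comp_obj_eq C (φ := δ 0) (ψ := δ 0) rfl M).symm)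

section
variable (C : SimplexCategory ⥤ Cat.{v, u})

theorem push {x y z : SimplexCategory} {φ : x ⟶ y} {ψ : y ⟶ z} {χ : x ⟶ z}
    (h : φ ≫ ψ = χ) {A B : C.obj x} (f : A ⟶ B) :
    (C.map ψ).toFunctor.map ((C.map φ).toFunctor.map f) =
      eqToHom (map_comp_obj_eq C h A) ≫ (C.map χ).toFunctor.map f ≫
        eqToHom (map_comp_obj_eq C h B).symm := by
  subst h
  have := Functor.congr_hom (congrArg Cat.Hom.toFunctor (C.map_comp φ ψ).symm) f
  simpa using this

/-- the edge map `⦋1⦌ ⟶ x` picking out `a ≤ b`. -/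
def edge {x : SimplexCategory} (a b : Fin (x.len + 1)) (h : a ≤ b) :
    (⦋1⦌ : SimplexCategory) ⟶ x :=
  SimplexCategory.Hom.mk
    { toFun := fun i => match i with
        | 0 => a
        | 1 => b
      monotone' := fun i j hij => match i, j, hij with
        | 0, 0, _ => le_rfl
        | 1, 1, _ => le_rfl
        | 0, 1, _ => h }

lemma δ1_edge {x : SimplexCategory} (a b : Fin (x.len + 1)) (h : a ≤ b) :
    δ 1 ≫ edge a b h = SimplexCategory.const ⦋0⦌ x a := by
  ext i
  match i with
  | 0 => rfl

lemma δ0_edge {x : SimplexCategory} (a b : Fin (x.len + 1)) (h : a ≤ b) :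
    δ 0 ≫ edge a b h = SimplexCategory.const ⦋0⦌ x b := by
  ext i
  match i with
  | 0 => rfl

lemma edge_comp {x y : SimplexCategory} (a b : Fin (x.len + 1)) (h : a ≤ b) (ψ : x ⟶ y) :
    edge a b h ≫ ψ = edge (ψ.toOrderHom a) (ψ.toOrderHom b) (ψ.toOrderHom.monotone h) := by
  ext i
  match i with
  | 0 => rfl
  | 1 => rfl

lemma edge_self {x : SimplexCategory} (a : Fin (x.len + 1)) :
    edge a a le_rfl = σ 0 ≫ SimplexCategory.const ⦋0⦌ x a := by
  ext i
  match i with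
  | 0 => rfl
  | 1 => rfl

/-- the triangle map `⦋2⦌ ⟶ x`. -/
def tri {x : SimplexCategory} (a b c : Fin (x.len + 1)) (h₁ : a ≤ b) (h₂ : b ≤ c) :
    (⦋2⦌ : SimplexCategory) ⟶ x :=
  SimplexCategory.Hom.mk
    { toFun := fun i => match i with
        | 0 => a
        | 1 => b
        | 2 => c
      monotone' := fun i j hij => match i, j, hij with
        | 0, 0, _ => le_rfl
        | 1, 1, _ => le_rfl
        | 2, 2, _ => le_rfl
        | 0, 1, _ => h₁
        | 1, 2, _ => h₂
        | 0, 2, _ => h₁.trans h₂ }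

lemma δ0_tri {x : SimplexCategory} (a b c : Fin (x.len + 1)) (h₁ : a ≤ b) (h₂ : b ≤ c) :
    δ 0 ≫ tri a b c h₁ h₂ = edge b c h₂ := by
  ext i
  match i with
  | 0 => rfl
  | 1 => rfl

lemma δ1_tri {x : SimplexCategory} (a b c : Fin (x.len + 1)) (h₁ : a ≤ b) (h₂ : b ≤ c) :
    δ 1 ≫ tri a b c h₁ h₂ = edge a c (h₁.trans h₂) := by
  ext i
  match i with
  | 0 => rfl
  | 1 => rfl

lemma δ2_tri {x : SimplexCategory} (a b c : Fin (x.len + 1)) (h₁ : a ≤ b) (h₂ : b ≤ c) :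
    δ 2 ≫ tri a b c h₁ h₂ = edge a b h₁ := by
  ext i
  match i with
  | 0 => rfl
  | 1 => rfl

end
section
variable {C : SimplexCategory ⥤ Cat.{v, u}} (P : CocyclePair C)

/-- The object of `C.obj x` over the vertex `i`. -/
abbrev X {x : SimplexCategory} (i : Fin (x.len + 1)) : C.obj x :=
  (C.map (SimplexCategory.const ⦋0⦌ x i)).toFunctor.obj P.M

/-- The edge isomorphism obtained by pushing `θ` forward along `edge a b h`. -/
def edgeIso {x : SimplexCategory} (a b : Fin (x.len + 1)) (h : a ≤ b) :
    X P a ≅ X P b :=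
  eqToIso (map_comp_obj_eq C (δ1_edge a b h) P.M).symm ≪≫
    (C.map (edge a b h)).toFunctor.mapIso P.θ ≪≫
      eqToIso (map_comp_obj_eq C (δ0_edge a b h) P.M)

lemma edgeIso_comp {x : SimplexCategory} (a b c : Fin (x.len + 1)) (h₁ : a ≤ b) (h₂ : b ≤ c) :
    (edgeIso P a b h₁).hom ≫ (edgeIso P b c h₂).hom = (edgeIso P a c (h₁.trans h₂)).hom := by
  have key := congrArg (fun f => (C.map (tri a b c h₁ h₂)).toFunctor.map f) P.cocycle
  simp only [Functor.map_comp, eqToHom_map,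
    push C (δ2_tri a b c h₁ h₂) P.θ.hom,
    push C (δ0_tri a b c h₁ h₂) P.θ.hom,
    push C (δ1_tri a b c h₁ h₂) P.θ.hom] at key
  have ha : X P a = (C.map (tri a b c h₁ h₂)).toFunctor.obj ((C.map (δ 2)).toFunctor.obj ((C.map (δ 1)).toFunctor.obj P.M)) :=
    ((map_comp_obj_eq C (δ2_tri a b c h₁ h₂) _).trans
      (map_comp_obj_eq C (δ1_edge a b h₁) P.M)).symm
  have hc : (C.map (tri a b c h₁ h₂)).toFunctor.obj ((C.map (δ 0)).toFunctor.obj ((C.map (δ 0)).toFunctor.obj P.M)) = X P c :=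
    (map_comp_obj_eq C (δ0_tri a b c h₁ h₂) _).trans (map_comp_obj_eq C (δ0_edge b c h₂) P.M)
  have key2 := congrArg (fun f => eqToHom ha ≫ f ≫ eqToHom hc) key
  simp only [Category.assoc, eqToHom_trans_assoc, eqToHom_trans, eqToHom_refl,
    Category.comp_id, Category.id_comp] at key2
  simp only [edgeIso, Iso.trans_hom, eqToIso.hom, Functor.mapIso_hom, Category.assoc,
    eqToHom_trans_assoc, eqToHom_trans, eqToHom_refl, Category.comp_id, Category.id_comp]
  exact key2

lemma edgeIso_self {x : SimplexCategory} (a : Fin (x.len + 1)) :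
    (edgeIso P a a le_rfl).hom = 𝟙 _ := by
  have h := edgeIso_comp P a a a le_rfl le_rfl
  rw [← cancel_epi (edgeIso P a a le_rfl).hom, Category.comp_id]
  exact h

end
section
variable {C : SimplexCategory ⥤ Cat.{v, u}} (P : CocyclePair C)

/-- The chain of edge isomorphisms from the base vertex `0` to `i`. -/
def g {x : SimplexCategory} (i : Fin (x.len + 1)) : X P 0 ≅ X P i :=
  Fin.induction (Iso.refl _)
    (fun j ih => ih ≪≫ edgeIso P j.castSucc j.succ (Fin.castSucc_le_succ j)) i

lemma g_zero {x : SimplexCategory} : g P (0 : Fin (x.len + 1)) = Iso.refl _ :=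
  Fin.induction_zero _ _

lemma g_succ {x : SimplexCategory} (j : Fin x.len) :
    g P j.succ = g P j.castSucc ≪≫ edgeIso P j.castSucc j.succ (Fin.castSucc_le_succ j) :=
  Fin.induction_succ _ _ j

lemma edge_eq_g {x : SimplexCategory} (a b : Fin (x.len + 1)) (h : a ≤ b) :
    (edgeIso P a b h).hom = (g P a).inv ≫ (g P b).hom := by
  induction b using Fin.induction with
  | zero =>
    have ha : a = 0 := le_antisymm h (Fin.zero_le a)
    subst ha
    rw [edgeIso_self, g_zero]
    simp
  | succ j ih =>
    by_cases hab : a = j.succ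
    · subst hab
      rw [edgeIso_self]
      simp
    · have h' : a ≤ j.castSucc := by
        rcases lt_or_eq_of_le h with h2 | h2
        · exact Fin.le_castSucc_iff.mpr h2
        · exact absurd h2 hab
      rw [← edgeIso_comp P a j.castSucc j.succ h' (Fin.castSucc_le_succ j), ih h',
        g_succ]
      simp

/-- The functor `I.obj x ⥤ C.obj x` induced by a cocycle pair. -/
def F (x : SimplexCategory) : (I.{v, u}.obj x) ⥤ C.obj x where
  obj i := X P i.down
  map {i j} _ := (g P i.down).inv ≫ (g P j.down).hom
  map_id i := by simp
  map_comp f g := by simp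

lemma objX {x y : SimplexCategory} (ψ : x ⟶ y) (i : Fin (x.len + 1)) :
    (C.map ψ).toFunctor.obj (X P i) = X P (ψ.toOrderHom i) :=
  map_comp_obj_eq C (SimplexCategory.const_comp ⦋0⦌ ψ i) P.M

lemma nat_edge {x y : SimplexCategory} (ψ : x ⟶ y) (a b : Fin (x.len + 1)) (h : a ≤ b) :
    (C.map ψ).toFunctor.map (edgeIso P a b h).hom =
      eqToHom (objX P ψ a) ≫
        (edgeIso P (ψ.toOrderHom a) (ψ.toOrderHom b) (ψ.toOrderHom.monotone h)).hom ≫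
          eqToHom (objX P ψ b).symm := by
  simp only [edgeIso, Iso.trans_hom, eqToIso.hom, Functor.mapIso_hom, Functor.map_comp,
    eqToHom_map, push C (edge_comp a b h ψ) P.θ.hom, Category.assoc,
    eqToHom_trans_assoc, eqToHom_trans, eqToHom_refl, Category.comp_id, Category.id_comp]

lemma nat_g_iso {x y : SimplexCategory} (ψ : x ⟶ y) (i : Fin (x.len + 1)) :
    (C.map ψ).toFunctor.mapIso (g P i) =
      eqToIso (objX P ψ 0) ≪≫ (g P (ψ.toOrderHom 0)).symm ≪≫ g P (ψ.toOrderHom i) ≪≫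
        eqToIso (objX P ψ i).symm := by
  induction i using Fin.induction with
  | zero =>
    ext
    simp [g_zero]
  | succ j ih =>
    ext
    have hmap := congrArg Iso.hom ih
    simp only [Functor.mapIso_hom, Iso.trans_hom, eqToIso.hom, Iso.symm_hom] at hmap ⊢
    rw [g_succ, Iso.trans_hom, Functor.map_comp, hmap, nat_edge,
      edge_eq_g P (ψ.toOrderHom j.castSucc) (ψ.toOrderHom j.succ)]
    simp

end
section
variable {C : SimplexCategory ⥤ Cat.{v, u}} (P : CocyclePair C)

lemma F_natural {x y : SimplexCategory} (ψ : x ⟶ y) :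
    F P x ⋙ (C.map ψ).toFunctor = (I.{v, u}.map ψ).toFunctor ⋙ F P y := by
  refine CategoryTheory.Functor.ext (fun i => objX P ψ i.down) ?_
  intro i j f
  have h1 := congrArg Iso.hom (nat_g_iso P ψ j.down)
  have h2 := congrArg Iso.inv (nat_g_iso P ψ i.down)
  simp only [Functor.mapIso_hom, Functor.mapIso_inv, Iso.trans_hom, Iso.trans_inv,
    Iso.symm_hom, Iso.symm_inv, eqToIso.hom, eqToIso.inv, Category.assoc] at h1 h2
  show (C.map ψ).toFunctor.map ((g P i.down).inv ≫ (g P j.down).hom) = _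
  rw [Functor.map_comp, h1, h2]
  show _ = eqToHom _ ≫ ((g P (ψ.toOrderHom i.down)).inv ≫ (g P (ψ.toOrderHom j.down)).hom) ≫ eqToHom _
  simp only [Category.assoc, eqToHom_trans_assoc, eqToHom_refl, Category.id_comp,
    Iso.hom_inv_id_assoc]

/-- The natural transformation `I ⟶ C` induced by a cocycle pair. -/
def Ψfun : I.{v, u} ⟶ C where
  app x := (F P x).toCatHom
  naturality _ _ ψ := Cat.Hom.ext (F_natural P ψ).symm

end
section
variable {C : SimplexCategory ⥤ Cat.{v, u}}

lemma nat_push_pt (φ : I.{v, u} ⟶ C) {x y : SimplexCategory} (ψ : x ⟶ y)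
    (i j : Fin (x.len + 1)) :
    (C.map ψ).toFunctor.map ((φ.app x).toFunctor.map (⟨⟩ : pt i ⟶ pt j)) =
      eqToHom (Functor.congr_obj (congrArg Cat.Hom.toFunctor (φ.naturality ψ)) (pt i)).symm ≫
        (φ.app y).toFunctor.map (⟨⟩ : pt (ψ.toOrderHom i) ⟶ pt (ψ.toOrderHom j)) ≫
          eqToHom (Functor.congr_obj (congrArg Cat.Hom.toFunctor (φ.naturality ψ)) (pt j)) := by
  have h : (φ.app y).toFunctor.map (⟨⟩ : pt (ψ.toOrderHom i) ⟶ pt (ψ.toOrderHom j)) =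
      eqToHom (Functor.congr_obj (congrArg Cat.Hom.toFunctor (φ.naturality ψ)) (pt i)) ≫
        (C.map ψ).toFunctor.map ((φ.app x).toFunctor.map (⟨⟩ : pt i ⟶ pt j)) ≫
          eqToHom (Functor.congr_obj (congrArg Cat.Hom.toFunctor (φ.naturality ψ)) (pt j)).symm :=
    Functor.congr_hom (congrArg Cat.Hom.toFunctor (φ.naturality ψ)) (⟨⟩ : pt i ⟶ pt j)
  rw [h]
  simp

/-- The isomorphism component of the cocycle pair associated to `φ`. -/
def Φθ (φ : I.{v, u} ⟶ C) :
    (C.map (δ 1)).toFunctor.obj ((φ.app ⦋0⦌).toFunctor.obj (pt 0)) ≅ (C.map (δ 0)).toFunctor.obj ((φ.app ⦋0⦌).toFunctor.obj (pt 0)) where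
  hom := eqToHom (Functor.congr_obj (congrArg Cat.Hom.toFunctor (φ.naturality (δ 1))) (pt 0)).symm ≫
    (φ.app ⦋1⦌).toFunctor.map (⟨⟩ : pt (0 : Fin 2) ⟶ pt 1) ≫
      eqToHom (Functor.congr_obj (congrArg Cat.Hom.toFunctor (φ.naturality (δ 0))) (pt 0))
  inv := eqToHom (Functor.congr_obj (congrArg Cat.Hom.toFunctor (φ.naturality (δ 0))) (pt 0)).symm ≫
    (φ.app ⦋1⦌).toFunctor.map (⟨⟩ : pt (1 : Fin 2) ⟶ pt 0) ≫
      eqToHom (Functor.congr_obj (congrArg Cat.Hom.toFunctor (φ.naturality (δ 1))) (pt 0))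
  hom_inv_id := by
    simp only [Category.assoc, eqToHom_trans_assoc, eqToHom_refl, Category.id_comp,
      ← Functor.map_comp_assoc]
    erw [← Functor.map_comp_assoc]
    show eqToHom _ ≫ (φ.app ⦋1⦌).toFunctor.map (𝟙 (pt (0 : Fin 2))) ≫ eqToHom _ = _
    rw [CategoryTheory.Functor.map_id]
    simp
    exact (eqToHom_trans _ _).trans (eqToHom_refl _ _)
  inv_hom_id := by
    simp only [Category.assoc, eqToHom_trans_assoc, eqToHom_refl, Category.id_comp,
      ← Functor.map_comp_assoc]
    erw [← Functor.map_comp_assoc]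
    show eqToHom _ ≫ (φ.app ⦋1⦌).toFunctor.map (𝟙 (pt (1 : Fin 2))) ≫ eqToHom _ = _
    rw [CategoryTheory.Functor.map_id]
    simp
    exact (eqToHom_trans _ _).trans (eqToHom_refl _ _)

@[local simp] lemma δ20 : ((δ 2 : (⦋1⦌:SimplexCategory) ⟶ ⦋2⦌).toOrderHom) (0 : Fin 2) = 0 := rfl
@[local simp] lemma δ21 : ((δ 2 : (⦋1⦌:SimplexCategory) ⟶ ⦋2⦌).toOrderHom) (1 : Fin 2) = 1 := rfl
@[local simp] lemma δ00 : ((δ 0 : (⦋1⦌:SimplexCategory) ⟶ ⦋2⦌).toOrderHom) (0 : Fin 2) = 1 := rfl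
@[local simp] lemma δ01 : ((δ 0 : (⦋1⦌:SimplexCategory) ⟶ ⦋2⦌).toOrderHom) (1 : Fin 2) = 2 := rfl
@[local simp] lemma δ10 : ((δ 1 : (⦋1⦌:SimplexCategory) ⟶ ⦋2⦌).toOrderHom) (0 : Fin 2) = 0 := rfl
@[local simp] lemma δ11 : ((δ 1 : (⦋1⦌:SimplexCategory) ⟶ ⦋2⦌).toOrderHom) (1 : Fin 2) = 2 := rfl

lemma Φ_cocycle (φ : I.{v, u} ⟶ C) :
    (C.map (δ 2)).toFunctor.map (Φθ φ).hom ≫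
        eqToHom ((map_comp_obj_eq C
            (SimplexCategory.δ_comp_δ (n := 0) (i := 0) (j := 1) (by decide)) _).trans
          (map_comp_obj_eq C (φ := δ 1) (ψ := δ 0) rfl _).symm) ≫
      (C.map (δ 0)).toFunctor.map (Φθ φ).hom =
    eqToHom ((map_comp_obj_eq C
          (SimplexCategory.δ_comp_δ (n := 0) (i := 1) (j := 1) le_rfl) _).trans
        (map_comp_obj_eq C (φ := δ 1) (ψ := δ 1) rfl _).symm) ≫
      (C.map (δ 1)).toFunctor.map (Φθ φ).hom ≫
        eqToHom ((map_comp_obj_eq C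
            (SimplexCategory.δ_comp_δ (n := 0) (i := 0) (j := 0) le_rfl) _).trans
          (map_comp_obj_eq C (φ := δ 0) (ψ := δ 0) rfl _).symm) := by
  simp only [Φθ, Functor.map_comp, eqToHom_map,
    nat_push_pt φ (δ 2) (0 : Fin 2) 1, nat_push_pt φ (δ 0) (0 : Fin 2) 1,
    nat_push_pt φ (δ 1) (0 : Fin 2) 1, δ20, δ21, δ00, δ01, δ10, δ11,
    Category.assoc, eqToHom_trans_assoc, eqToHom_trans, eqToHom_refl,
    Category.comp_id, Category.id_comp]
  erw [nat_push_pt φ (δ 2) (0 : Fin 2) 1, nat_push_pt φ (δ 0) (0 : Fin 2) 1,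
    nat_push_pt φ (δ 1) (0 : Fin 2) 1]
  repeat erw [Category.assoc]
  repeat erw [eqToHom_trans_assoc]
  erw [eqToHom_refl, Category.id_comp, eqToHom_trans, eqToHom_trans, ← Functor.map_comp_assoc]
  rfl

/-- The cocycle pair associated to a natural transformation `I ⟶ C`. -/
def Φfun (φ : I.{v, u} ⟶ C) : CocyclePair C :=
  ⟨(φ.app ⦋0⦌).toFunctor.obj (pt 0), Φθ φ, Φ_cocycle φ⟩

end
section
variable {C : SimplexCategory ⥤ Cat.{v, u}}

lemma CocyclePair.ext' {P Q : CocyclePair C} (hM : P.M = Q.M)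
    (hθ : P.θ.hom =
      eqToHom (by rw [hM]) ≫ Q.θ.hom ≫ eqToHom (by rw [hM])) : P = Q := by
  obtain ⟨M, θ, c⟩ := P
  obtain ⟨M', θ', c'⟩ := Q
  cases hM
  simp only [eqToHom_refl, Category.comp_id, Category.id_comp] at hθ
  cases Iso.ext hθ
  rfl

@[local simp] lemma edge_apply0 {x : SimplexCategory} (a b : Fin (x.len + 1)) (h : a ≤ b) :
    (edge a b h).toOrderHom (0 : Fin 2) = a := rfl

@[local simp] lemma edge_apply1 {x : SimplexCategory} (a b : Fin (x.len + 1)) (h : a ≤ b) :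
    (edge a b h).toOrderHom (1 : Fin 2) = b := rfl

lemma one_eq_succ_zero : (1 : Fin 2) = Fin.succ (0 : Fin 1) := rfl

lemma edge_zero_one : edge (0 : Fin 2) 1 (by decide) = 𝟙 (⦋1⦌ : SimplexCategory) := by
  apply SimplexCategory.Hom.ext
  exact OrderHom.ext _ _ (funext fun i => by fin_cases i <;> rfl)

lemma ΦΨ (P : CocyclePair C) : Φfun (Ψfun P) = P := by
  have hM : (Φfun (Ψfun P)).M = P.M := by
    show X P 0 = P.M
    show (C.map (SimplexCategory.const ⦋0⦌ ⦋0⦌ 0)).toFunctor.obj P.M = P.M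
    rw [SimplexCategory.const_eq_id, CategoryTheory.Functor.map_id]
    rfl
  refine CocyclePair.ext' hM ?_
  show (Φθ (Ψfun P)).hom = _
  show eqToHom _ ≫ (F P ⦋1⦌).map (⟨⟩ : pt (0 : Fin 2) ⟶ pt 1) ≫ eqToHom _ = _
  show eqToHom _ ≫ ((g (x := ⦋1⦌) P (Fin.castSucc (0 : Fin 1))).inv ≫ (g (x := ⦋1⦌) P (Fin.succ (0 : Fin 1))).hom) ≫
    eqToHom _ = _
  rw [g_succ]
  simp only [Iso.trans_hom, Iso.inv_hom_id_assoc]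
  have he : (edgeIso (x := ⦋1⦌) P (Fin.castSucc (0 : Fin 1)) (Fin.succ (0 : Fin 1)) (Fin.castSucc_le_succ (0 : Fin 1))).hom =
      eqToHom (map_comp_obj_eq C (δ1_edge _ _ _) P.M).symm ≫
        (C.map (edge (x := ⦋1⦌) (Fin.castSucc (0 : Fin 1)) (Fin.succ (0 : Fin 1)) (Fin.castSucc_le_succ (0 : Fin 1)))).toFunctor.map
          P.θ.hom ≫ eqToHom (map_comp_obj_eq C (δ0_edge _ _ _) P.M) := by
    simp [edgeIso]
  rw [he]
  have hid : edge (x := ⦋1⦌) (Fin.castSucc (0 : Fin 1)) (Fin.succ (0 : Fin 1)) (Fin.castSucc_le_succ (0 : Fin 1)) =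
      𝟙 (⦋1⦌ : SimplexCategory) := edge_zero_one
  rw [Functor.congr_hom (congrArg (fun f => (C.map f).toFunctor) hid) P.θ.hom,
    Functor.congr_hom (congrArg Cat.Hom.toFunctor (C.map_id ⦋1⦌)) P.θ.hom]
  simp
  erw [eqToHom_trans_assoc, eqToHom_trans]
  rfl

end
section
variable {C : SimplexCategory ⥤ Cat.{v, u}}

/-- The unique isomorphism between two points of the indiscrete category. -/
def ptIso {x : SimplexCategory} (i j : Fin (x.len + 1)) : (pt (n := x) i) ≅ pt j where
  hom := PUnit.unit
  inv := PUnit.unit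
  hom_inv_id := rfl
  inv_hom_id := rfl

lemma XQeq (φ : I.{v, u} ⟶ C) {x : SimplexCategory} (k : Fin (x.len + 1)) :
    X (Φfun φ) k = (φ.app x).toFunctor.obj (pt k) :=
  (Functor.congr_obj (congrArg Cat.Hom.toFunctor (φ.naturality (SimplexCategory.const ⦋0⦌ x k))) (pt 0)).symm

lemma A2 (φ : I.{v, u} ⟶ C) {x : SimplexCategory} (a b : Fin (x.len + 1)) (h : a ≤ b) :
    (edgeIso (Φfun φ) a b h).hom =
      eqToHom (XQeq φ a) ≫ (φ.app x).toFunctor.map (ptIso a b).hom ≫ eqToHom (XQeq φ b).symm := by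
  simp only [edgeIso, Iso.trans_hom, eqToIso.hom, Functor.mapIso_hom]
  show eqToHom _ ≫ (C.map (edge a b h)).toFunctor.map (Φθ φ).hom ≫ eqToHom _ = _
  simp only [Φθ, Functor.map_comp, eqToHom_map,
    nat_push_pt φ (edge a b h) (0 : Fin 2) 1, edge_apply0, edge_apply1,
    Category.assoc, eqToHom_trans_assoc, eqToHom_trans, eqToHom_refl,
    Category.comp_id, Category.id_comp]
  erw [nat_push_pt φ (edge a b h) (0 : Fin 2) 1]
  repeat erw [Category.assoc]
  repeat erw [eqToHom_trans_assoc]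
  erw [eqToHom_trans]
  rfl

lemma A1 (φ : I.{v, u} ⟶ C) {x : SimplexCategory} (k : Fin (x.len + 1)) :
    g (Φfun φ) k =
      eqToIso (XQeq φ 0) ≪≫ (φ.app x).toFunctor.mapIso (ptIso 0 k) ≪≫ eqToIso (XQeq φ k).symm := by
  induction k using Fin.induction with
  | zero =>
    rw [g_zero]
    ext
    show 𝟙 _ = eqToHom (XQeq φ 0) ≫ (φ.app x).toFunctor.map (ptIso 0 0).hom ≫ eqToHom (XQeq φ (0 : Fin (x.len + 1))).symm
    have hid : (φ.app x).toFunctor.map (ptIso (0 : Fin (x.len + 1)) 0).hom = 𝟙 _ :=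
      (φ.app x).toFunctor.map_id (pt 0)
    rw [hid]
    simp
  | succ j ih =>
    rw [g_succ, ih]
    ext
    simp only [Iso.trans_hom, eqToIso.hom, Functor.mapIso_hom, Iso.symm_hom, Category.assoc]
    rw [A2 φ j.castSucc j.succ (Fin.castSucc_le_succ j)]
    simp only [Category.assoc, eqToHom_trans_assoc, eqToHom_refl, Category.id_comp]
    rw [← Functor.map_comp_assoc]
    rfl

lemma ΨΦ (φ : I.{v, u} ⟶ C) : Ψfun (Φfun φ) = φ := by
  apply NatTrans.ext
  funext x
  apply Cat.Hom.ext
  refine CategoryTheory.Functor.ext (fun i => XQeq φ i.down) ?_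
  intro i j f
  show (g (Φfun φ) i.down).inv ≫ (g (Φfun φ) j.down).hom = _
  have hhom := congrArg Iso.hom (A1 φ j.down)
  have hinv := congrArg Iso.inv (A1 φ i.down)
  simp only [Iso.trans_hom, Iso.trans_inv, eqToIso.hom, eqToIso.inv, Functor.mapIso_hom,
    Functor.mapIso_inv, Category.assoc] at hhom hinv
  rw [hhom, hinv]
  simp only [Category.assoc, eqToHom_trans_assoc, eqToHom_refl, Category.id_comp]
  rw [← Functor.map_comp_assoc]
  rfl

end
/-- Natural transformations `I ⟶ C` from the indiscrete cosimplicial category to a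
cosimplicial object `C` in `Cat` are in bijection with pairs `(M, θ)` of an object `M` of
`C⦋0⦌` and an isomorphism `θ : d¹M ≅ d⁰M` satisfying the cocycle condition; the bijection
sends `φ` to the pair consisting of `M = φ_{⦋0⦌}(0)` and `θ = φ_{⦋1⦌}` applied to the
unique morphism `0 ⟶ 1` of `I⦋1⦌`. -/
theorem natTrans_equiv_cocyclePair (C : SimplexCategory ⥤ Cat.{v, u}) :
    ∃ Φ : (I.{v, u} ⟶ C) → CocyclePair C,
      Function.Bijective Φ ∧
        ∀ φ : I.{v, u} ⟶ C,
          ∃ h : (Φ φ).M = (φ.app ⦋0⦌).toFunctor.obj (pt 0),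
            (Φ φ).θ.hom =
              eqToHom (by
                  rw [h]
                  exact (Functor.congr_obj (congrArg Cat.Hom.toFunctor (φ.naturality (δ 1))) (pt 0)).symm) ≫
                (φ.app ⦋1⦌).toFunctor.map (⟨⟩ : pt (0 : Fin 2) ⟶ pt 1) ≫
                  eqToHom (by
                    rw [h]
                    exact Functor.congr_obj (congrArg Cat.Hom.toFunctor (φ.naturality (δ 0))) (pt 0)) := by
  refine ⟨Φfun, ?_, fun φ => ⟨rfl, rfl⟩⟩
  rw [Function.bijective_iff_has_inverse]
  exact ⟨Ψfun, ΨΦ, ΦΨ⟩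

end IndiscreteCosimplicial
end

section
/- Let k be a commutative ring, V a k-module, B a k-algebra, and let f, g : TensorAlgebra k V →ₐ[k] B be k-algebra homomorphisms. Call a k-linear map D : TensorAlgebra k V →ₗ[k] B an (f, g)-derivation if D(x * y) = f(x) * D(y) + D(x) * g(y) for all x, y in TensorAlgebra k V. Then restriction along the canonical inclusion ι : V →ₗ[k] TensorAlgebra k V is a bijection from the set of (f, g)-derivations to the set of k-linear maps V →ₗ[k] B; that is, for every k-linear map h : V →ₗ[k] B there exists a unique (f, g)-derivation D with D ∘ ι = h. -/
set_option maxHeartbeats 1000000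


/-- Let `k` be a commutative ring, `V` a `k`-module, `B` a `k`-algebra, and
`f, g : TensorAlgebra k V →ₐ[k] B` algebra homomorphisms.  A `k`-linear map
`D : TensorAlgebra k V →ₗ[k] B` is an `(f, g)`-derivation if
`D (x * y) = f x * D y + D x * g y` for all `x y`.  Restriction along the canonical
inclusion `ι : V →ₗ[k] TensorAlgebra k V` is a bijection from `(f, g)`-derivations to
`k`-linear maps `V →ₗ[k] B`: for every `h : V →ₗ[k] B` there is a unique
`(f, g)`-derivation `D` with `D ∘ ι = h`. -/
theorem tensorAlgebra_fg_derivation_unique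
    (k V B : Type u) [CommRing k] [AddCommGroup V] [Module k V] [Ring B] [Algebra k B]
    (f g : TensorAlgebra k V →ₐ[k] B) (h : V →ₗ[k] B) :
    ∃! D : TensorAlgebra k V →ₗ[k] B,
      (∀ x y : TensorAlgebra k V, D (x * y) = f x * D y + D x * g y) ∧
        D ∘ₗ TensorAlgebra.ι k = h := by
  classical
  set φ : V →ₗ[k] Matrix (Fin 2) (Fin 2) B :=
    { toFun := fun v => !![f (TensorAlgebra.ι k v), h v; 0, g (TensorAlgebra.ι k v)]
      map_add' := by
        intro v w
        ext i j
        fin_cases i <;> fin_cases j <;> simp [Matrix.add_apply]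
      map_smul' := by
        intro c v
        ext i j
        fin_cases i <;> fin_cases j <;> simp [Matrix.smul_apply] } with hφ
  set ψ := TensorAlgebra.lift k φ with hψ
  have hψι : ∀ v, ψ (TensorAlgebra.ι k v) =
      !![f (TensorAlgebra.ι k v), h v; 0, g (TensorAlgebra.ι k v)] := by
    intro v
    rw [hψ, TensorAlgebra.lift_ι_apply]
    rfl
  have key : ∀ x : TensorAlgebra k V,
      ψ x 1 0 = 0 ∧ ψ x 0 0 = f x ∧ ψ x 1 1 = g x := by
    intro x
    induction x using TensorAlgebra.induction with
    | algebraMap r =>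
        rw [AlgHom.commutes, AlgHom.commutes, AlgHom.commutes]
        refine ⟨?_, ?_, ?_⟩ <;> simp [Matrix.algebraMap_matrix_apply]
    | ι v =>
        rw [hψι v]
        refine ⟨?_, ?_, ?_⟩ <;> simp
    | mul x y ihx ihy =>
        obtain ⟨hx0, hx1, hx2⟩ := ihx
        obtain ⟨hy0, hy1, hy2⟩ := ihy
        rw [map_mul, map_mul, map_mul]
        refine ⟨?_, ?_, ?_⟩ <;>
          simp [Matrix.mul_apply, Fin.sum_univ_two, hx0, hx1, hx2, hy0, hy1, hy2]
    | add x y ihx ihy =>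
        obtain ⟨hx0, hx1, hx2⟩ := ihx
        obtain ⟨hy0, hy1, hy2⟩ := ihy
        rw [map_add, map_add, map_add]
        refine ⟨?_, ?_, ?_⟩ <;> simp [Matrix.add_apply, hx0, hx1, hx2, hy0, hy1, hy2]
  set E : Matrix (Fin 2) (Fin 2) B →ₗ[k] B :=
    { toFun := fun A => A 0 1
      map_add' := fun _ _ => rfl
      map_smul' := fun _ _ => rfl } with hE
  have hEapp : ∀ A : Matrix (Fin 2) (Fin 2) B, E A = A 0 1 := fun _ => rfl
  refine ⟨E ∘ₗ ψ.toLinearMap, ⟨?_, ?_⟩, ?_⟩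
  · intro x y
    simp only [LinearMap.comp_apply, AlgHom.toLinearMap_apply, hEapp, map_mul,
      Matrix.mul_apply, Fin.sum_univ_two]
    rw [(key x).2.1, (key y).2.2]
  · ext v
    simp only [LinearMap.comp_apply, AlgHom.toLinearMap_apply, hEapp, hψι v]
    simp
  · rintro D ⟨hder, hres⟩
    have hD1 : D 1 = 0 := by
      have h2 : D 1 + D 1 = D 1 + 0 := by
        rw [add_zero]
        exact (by simpa using hder 1 1 : D 1 = D 1 + D 1).symm
      exact add_left_cancel h2
    ext x
    induction x using TensorAlgebra.induction with
    | algebraMap r =>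
        rw [Algebra.algebraMap_eq_smul_one, map_smul, map_smul, hD1, smul_zero]
        simp only [LinearMap.comp_apply, AlgHom.toLinearMap_apply, hEapp, map_one,
          smul_eq_mul]
        simp [Matrix.one_apply]
    | ι v =>
        have h1 : D (TensorAlgebra.ι k v) = h v := congrFun (congrArg DFunLike.coe hres) v
        simp only [LinearMap.comp_apply, AlgHom.toLinearMap_apply, hEapp, hψι v, h1]
        simp
    | mul x y ihx ihy =>
        rw [hder x y, ihx, ihy]
        simp only [LinearMap.comp_apply, AlgHom.toLinearMap_apply, hEapp, map_mul,
          Matrix.mul_apply, Fin.sum_univ_two]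
        rw [(key x).2.1, (key y).2.2]
    | add x y ihx ihy =>
        rw [map_add, map_add, ihx, ihy]
end
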